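/- Let M be a set, H a totally intransitive groupoid over M (α_H = β_H and H_m = H₂), and G, E local groupoids over M. Suppose j : H → E is an injective morphism over id_M, ρ : E → G is a surjective morphism over id_M with j(H) = ρ⁻¹(ε_G(M)) and E_m = (ρ×ρ)⁻¹(G_m), and s : G → E is a morphism over id_M with ρ ∘ s = id_G. Then: (a) for every (g,h) with β_G(g) = α_H(h), the products s(g) j(h) and (s(g) j(h)) s(g)⁻¹ are defined (the relevant pairs lie in E_m) and (s(g) j(h)) s(g)⁻¹ ∈ j(H), so that g•h := j⁻¹(s(g) j(h) s(g)⁻¹) is well defined, and • is an external action of G on H; (b) for every e ∈ E the pair (e, s(ρ(e)⁻¹)) lies in E_m and e · s(ρ(e)⁻¹) ∈ j(H), so that Φ : E → H ⋊ G, Φ(e) := (j⁻¹(e · s(ρ(e)⁻¹)), ρ(e)), is well defined; and Φ is an isomorphism of local groupoids over id_M (a bijective morphism over id_M whose inverse is a morphism over id_M) satisfying Φ ∘ j = j_⋊ and ρ_⋊ ∘ Φ = ρ, where j_⋊(h) := (h, ε_G(β_H(h))) and ρ_⋊(h,g) := g. -/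
import Mathlib


/-- A local groupoid over a set `M` (the algebraic axioms of a local Lie groupoid,
with smoothness omitted).  The multiplication is encoded as a total function `mul`
together with a predicate `Dm` describing the set `G_m` of multiplicable pairs;
the value of `mul` outside of `Dm` is irrelevant. -/
structure LocalGroupoid (M : Type*) (G : Type*) where
  src : G → M
  tgt : G → M
  e : M → G
  inv : G → G
  Dm : G → G → Prop
  mul : G → G → G
  comp_of_dm : ∀ {g₁ g₂ : G}, Dm g₁ g₂ → tgt g₁ = src g₂
  src_e : ∀ m, src (e m) = m
  tgt_e : ∀ m, tgt (e m) = m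
  dm_inv_inv : ∀ {g₁ g₂ : G}, Dm g₁ g₂ → Dm (inv g₂) (inv g₁)
  mul_inv_inv : ∀ {g₁ g₂ : G}, Dm g₁ g₂ → mul (inv g₂) (inv g₁) = inv (mul g₁ g₂)
  dm_e_src : ∀ g, Dm (e (src g)) g
  dm_e_tgt : ∀ g, Dm g (e (tgt g))
  e_src_mul : ∀ g, mul (e (src g)) g = g
  mul_e_tgt : ∀ g, mul g (e (tgt g)) = g
  dm_inv_right : ∀ g, Dm g (inv g)
  dm_inv_left : ∀ g, Dm (inv g) g
  mul_inv_self : ∀ g, mul g (inv g) = e (src g)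
  inv_mul_self : ∀ g, mul (inv g) g = e (tgt g)
  dm_assoc : ∀ {g₁ g₂ g₃ : G}, Dm g₁ g₂ → Dm g₂ g₃ → Dm g₁ (mul g₂ g₃) → Dm (mul g₁ g₂) g₃
  mul_assoc : ∀ {g₁ g₂ g₃ : G}, Dm g₁ g₂ → Dm g₂ g₃ → Dm g₁ (mul g₂ g₃) →
    mul (mul g₁ g₂) g₃ = mul g₁ (mul g₂ g₃)

namespace LocalGroupoid

/-- A morphism of local groupoids. -/
structure IsMorphism {M M' G G' : Type*} (A : LocalGroupoid M G) (B : LocalGroupoid M' G')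
    (F : G → G') : Prop where
  maps_e : ∀ m, ∃ m', F (A.e m) = B.e m'
  dm : ∀ {g₁ g₂ : G}, A.Dm g₁ g₂ → B.Dm (F g₁) (F g₂)
  map_mul : ∀ {g₁ g₂ : G}, A.Dm g₁ g₂ → F (A.mul g₁ g₂) = B.mul (F g₁) (F g₂)

/-- A morphism of local groupoids over `id_M` (the induced map on bases is the identity). -/
def IsMorphismOverId {M G G' : Type*} (A : LocalGroupoid M G) (B : LocalGroupoid M G')
    (F : G → G') : Prop :=
  IsMorphism A B F ∧ ∀ m, B.src (F (A.e m)) = m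

/-- A local groupoid is totally intransitive if `α = β`. -/
def TotallyIntransitive {M G : Type*} (A : LocalGroupoid M G) : Prop :=
  ∀ g, A.src g = A.tgt g

/-- A groupoid is a local groupoid in which all composable pairs are multiplicable,
i.e. `G_m = G₂`. -/
def IsGroupoid {M G : Type*} (A : LocalGroupoid M G) : Prop :=
  ∀ g₁ g₂, A.tgt g₁ = A.src g₂ → A.Dm g₁ g₂

/-- An external action of a local groupoid `G` on a totally intransitive groupoid `H`,
encoded as a total function `act` whose values on pairs with `β_G g ≠ α_H h` are
irrelevant. -/
def IsExternalAction {M GC HC : Type*} (AG : LocalGroupoid M GC) (AH : LocalGroupoid M HC)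
    (act : GC → HC → HC) : Prop :=
  (∀ g h, AG.tgt g = AH.src h → AH.src (act g h) = AG.src g) ∧
  (∀ g₁ g₂ h, AG.Dm g₁ g₂ → AG.tgt g₂ = AH.src h →
    act (AG.mul g₁ g₂) h = act g₁ (act g₂ h)) ∧
  (∀ g h₁ h₂, AG.tgt g = AH.src h₁ → AH.tgt h₁ = AH.src h₂ →
    act g (AH.mul h₁ h₂) = AH.mul (act g h₁) (act g h₂)) ∧
  (∀ h, act (AG.e (AH.src h)) h = h)

end LocalGroupoid

/-- The carrier of the semidirect product `H ⋊ G`: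
pairs `(h, g)` with `β_H(h) = α_G(g)`. -/
abbrev SDCarrier {M HC GC : Type*} (AH : LocalGroupoid M HC) (AG : LocalGroupoid M GC) :
    Type _ :=
  {p : HC × GC // AH.tgt p.1 = AG.src p.2}

/-- `P` is the semidirect product local groupoid `H ⋊ G` determined by the external
action `act`: its structure maps are characterized by the formulas of the paper
(the value of `P.mul` outside of `P_m` is irrelevant). -/
def IsSemidirectProduct {M HC GC : Type*} (AH : LocalGroupoid M HC) (AG : LocalGroupoid M GC)
    (act : GC → HC → HC) (P : LocalGroupoid M (SDCarrier AH AG)) : Prop :=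
  (∀ p, P.src p = AG.src p.val.2) ∧
  (∀ p, P.tgt p = AG.tgt p.val.2) ∧
  (∀ m, (P.e m).val = (AH.e m, AG.e m)) ∧
  (∀ p, (P.inv p).val = (AH.inv (act (AG.inv p.val.2) p.val.1), AG.inv p.val.2)) ∧
  (∀ p₁ p₂, P.Dm p₁ p₂ ↔ AG.Dm p₁.val.2 p₂.val.2) ∧
  (∀ p₁ p₂, P.Dm p₁ p₂ →
    (P.mul p₁ p₂).val =
      (AH.mul p₁.val.1 (act p₁.val.2 p₂.val.1), AG.mul p₁.val.2 p₂.val.2))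

/-- The canonical inclusion `j_⋊ : H → H ⋊ G`, `j_⋊(h) = (h, ε_G(β_H(h)))`. -/
def sdJ {M HC GC : Type*} (AH : LocalGroupoid M HC) (AG : LocalGroupoid M GC) (h : HC) :
    SDCarrier AH AG :=
  ⟨(h, AG.e (AH.tgt h)), (AG.src_e (AH.tgt h)).symm⟩

/-- The canonical projection `ρ_⋊ : H ⋊ G → G`, `ρ_⋊(h, g) = g`. -/
def sdRho {M HC GC : Type*} (AH : LocalGroupoid M HC) (AG : LocalGroupoid M GC)
    (p : SDCarrier AH AG) : GC :=
  p.val.2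

/-- The canonical splitting `s_⋊ : G → H ⋊ G`, `s_⋊(g) = (ε_H(α_G(g)), g)`. -/
def sdS {M HC GC : Type*} (AH : LocalGroupoid M HC) (AG : LocalGroupoid M GC) (g : GC) :
    SDCarrier AH AG :=
  ⟨(AH.e (AG.src g), g), AH.tgt_e (AG.src g)⟩

section AuxLemmas

namespace LocalGroupoid

variable {M G : Type*} (A : LocalGroupoid M G)

theorem src_inv (g : G) : A.src (A.inv g) = A.tgt g :=
  (A.comp_of_dm (A.dm_inv_right g)).symm

theorem tgt_inv (g : G) : A.tgt (A.inv g) = A.src g :=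
  A.comp_of_dm (A.dm_inv_left g)

theorem eq_inv_of_mul {a b : G} (h : A.Dm a b) (he : A.mul a b = A.e (A.src a)) :
    b = A.inv a := by
  have h1 : A.Dm (A.inv a) a := A.dm_inv_left a
  have h2 : A.Dm (A.inv a) (A.mul a b) := by
    rw [he, ← A.tgt_inv a]; exact A.dm_e_tgt (A.inv a)
  have h3 := A.mul_assoc h1 h h2
  rw [A.inv_mul_self, A.comp_of_dm h, A.e_src_mul, he, ← A.tgt_inv a, A.mul_e_tgt] at h3
  exact h3

theorem inv_e (m : M) : A.inv (A.e m) = A.e m := by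
  have h : A.Dm (A.e m) (A.e m) := by
    have := A.dm_e_src (A.e m); rwa [A.src_e] at this
  have he : A.mul (A.e m) (A.e m) = A.e (A.src (A.e m)) := by
    have := A.e_src_mul (A.e m); rw [A.src_e] at this; rw [this, A.src_e]
  exact (A.eq_inv_of_mul h he).symm

theorem inv_inv (g : G) : A.inv (A.inv g) = g := by
  have := A.eq_inv_of_mul (A.dm_inv_left g) (by rw [A.inv_mul_self, A.src_inv])
  exact this.symm

theorem dm_mul_inv {g₁ g₂ : G} (h : A.Dm g₁ g₂) : A.Dm (A.mul g₁ g₂) (A.inv g₂) := by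
  refine A.dm_assoc h (A.dm_inv_right g₂) ?_
  rw [A.mul_inv_self, ← A.comp_of_dm h]; exact A.dm_e_tgt g₁

theorem mul_inv_cancel {g₁ g₂ : G} (h : A.Dm g₁ g₂) :
    A.mul (A.mul g₁ g₂) (A.inv g₂) = g₁ := by
  have h3 : A.Dm g₁ (A.mul g₂ (A.inv g₂)) := by
    rw [A.mul_inv_self, ← A.comp_of_dm h]; exact A.dm_e_tgt g₁
  rw [A.mul_assoc h (A.dm_inv_right g₂) h3, A.mul_inv_self, ← A.comp_of_dm h, A.mul_e_tgt]

theorem dm_inv_mul {g₁ g₂ : G} (h : A.Dm g₁ g₂) : A.Dm (A.inv g₁) (A.mul g₁ g₂) := by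
  have h1 : A.Dm (A.mul (A.inv g₂) (A.inv g₁)) g₁ := by
    have := A.dm_mul_inv (A.dm_inv_inv h); rwa [A.inv_inv] at this
  have := A.dm_inv_inv h1
  rwa [A.mul_inv_inv h, A.inv_inv] at this

theorem inv_mul_cancel {g₁ g₂ : G} (h : A.Dm g₁ g₂) :
    A.mul (A.inv g₁) (A.mul g₁ g₂) = g₂ := by
  rw [← A.mul_assoc (A.dm_inv_left g₁) h (A.dm_inv_mul h), A.inv_mul_self,
    A.comp_of_dm h, A.e_src_mul]

theorem tgt_mul {g₁ g₂ : G} (h : A.Dm g₁ g₂) : A.tgt (A.mul g₁ g₂) = A.tgt g₂ := by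
  rw [A.comp_of_dm (A.dm_mul_inv h), A.src_inv]

theorem src_mul {g₁ g₂ : G} (h : A.Dm g₁ g₂) : A.src (A.mul g₁ g₂) = A.src g₁ := by
  have h2 : A.tgt (A.inv (A.mul g₁ g₂)) = A.src g₁ := by
    rw [← A.mul_inv_inv h, A.tgt_mul (A.dm_inv_inv h), A.tgt_inv]
  rw [← h2, A.tgt_inv]

variable {A}
variable {G' : Type*} {B : LocalGroupoid M G'} {F : G → G'}

theorem IsMorphismOverId.map_e (hF : IsMorphismOverId A B F) (m : M) : F (A.e m) = B.e m := by
  obtain ⟨m', hm'⟩ := hF.1.maps_e m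
  have h2 := hF.2 m
  rw [hm', B.src_e] at h2
  rw [hm', h2]

theorem IsMorphismOverId.map_src (hF : IsMorphismOverId A B F) (g : G) :
    B.src (F g) = A.src g := by
  have h := B.comp_of_dm (hF.1.dm (A.dm_e_src g))
  rw [hF.map_e, B.tgt_e] at h
  exact h.symm

theorem IsMorphismOverId.map_tgt (hF : IsMorphismOverId A B F) (g : G) :
    B.tgt (F g) = A.tgt g := by
  have h := B.comp_of_dm (hF.1.dm (A.dm_e_tgt g))
  rw [hF.map_e, B.src_e] at h
  exact h

theorem IsMorphismOverId.map_inv (hF : IsMorphismOverId A B F) (g : G) :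
    F (A.inv g) = B.inv (F g) := by
  refine B.eq_inv_of_mul (hF.1.dm (A.dm_inv_right g)) ?_
  rw [← hF.1.map_mul (A.dm_inv_right g), A.mul_inv_self, hF.map_e, hF.map_src]

end LocalGroupoid

end AuxLemmas

/-- Given a split extension `H →(j) E →(ρ) G` of local groupoids over `M` (with `H` a
totally intransitive groupoid, `j(H) = ker ρ` and `E_m = (ρ×ρ)⁻¹(G_m)`) and a right
splitting `s`, the formula `g • h := j⁻¹(s(g) j(h) s(g)⁻¹)` is well defined and gives
an external action of `G` on `H`, and `Φ(e) := (j⁻¹(e · s(ρ(e)⁻¹)), ρ(e))` is a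
well-defined isomorphism of local groupoids over `id_M` from `E` to `H ⋊ G` with
`Φ ∘ j = j_⋊` and `ρ_⋊ ∘ Φ = ρ`. -/
theorem right_splitting_gives_semidirect_isomorphism {M HC EC GC : Type*}
    (AH : LocalGroupoid M HC) (AE : LocalGroupoid M EC) (AG : LocalGroupoid M GC)
    (hTI : LocalGroupoid.TotallyIntransitive AH)
    (hHGpd : LocalGroupoid.IsGroupoid AH)
    (j : HC → EC) (hj : LocalGroupoid.IsMorphismOverId AH AE j)
    (hjinj : Function.Injective j)
    (hjdm : ∀ h₁ h₂, AE.Dm (j h₁) (j h₂) → AH.Dm h₁ h₂)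
    (ρ : EC → GC) (hρ : LocalGroupoid.IsMorphismOverId AE AG ρ)
    (hρsurj : Function.Surjective ρ)
    (hker : ∀ x, (∃ h, j h = x) ↔ (∃ m, ρ x = AG.e m))
    (hEm : ∀ x₁ x₂, AE.Dm x₁ x₂ ↔ AG.Dm (ρ x₁) (ρ x₂))
    (s : GC → EC) (hs : LocalGroupoid.IsMorphismOverId AG AE s)
    (hsec : ∀ g, ρ (s g) = g) :
    (∀ g h, AG.tgt g = AH.src h →
      AE.Dm (s g) (j h) ∧
      AE.Dm (AE.mul (s g) (j h)) (AE.inv (s g)) ∧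
      ∃ h', j h' = AE.mul (AE.mul (s g) (j h)) (AE.inv (s g))) ∧
    (∀ x, AE.Dm x (s (AG.inv (ρ x))) ∧ ∃ h, j h = AE.mul x (s (AG.inv (ρ x)))) ∧
    (∃ act : GC → HC → HC,
      (∀ g h, AG.tgt g = AH.src h →
        j (act g h) = AE.mul (AE.mul (s g) (j h)) (AE.inv (s g))) ∧
      LocalGroupoid.IsExternalAction AG AH act ∧
      ∀ P : LocalGroupoid M (SDCarrier AH AG), IsSemidirectProduct AH AG act P →
        ∃ Φ : EC → SDCarrier AH AG,
          (∀ x, j ((Φ x).val.1) = AE.mul x (s (AG.inv (ρ x))) ∧ (Φ x).val.2 = ρ x) ∧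
          Function.Bijective Φ ∧
          LocalGroupoid.IsMorphismOverId AE P Φ ∧
          (∀ ψ : SDCarrier AH AG → EC,
            Function.LeftInverse ψ Φ → Function.RightInverse ψ Φ →
            LocalGroupoid.IsMorphismOverId P AE ψ) ∧
          (∀ h, Φ (j h) = sdJ AH AG h) ∧
          (∀ x, sdRho AH AG (Φ x) = ρ x)) := by
  classical
  have dmE : ∀ {x y : EC}, AG.Dm (ρ x) (ρ y) → AE.Dm x y := fun h => (hEm _ _).2 h
  have ρmul : ∀ {x y : EC}, AE.Dm x y → ρ (AE.mul x y) = AG.mul (ρ x) (ρ y) :=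
    fun h => hρ.1.map_mul h
  have ρinv : ∀ x, ρ (AE.inv x) = AG.inv (ρ x) := fun x => hρ.map_inv x
  have sinv : ∀ g, s (AG.inv g) = AE.inv (s g) := fun g => hs.map_inv g
  have ρj : ∀ h, ρ (j h) = AG.e (AH.src h) := by
    intro h
    obtain ⟨m, hm⟩ := (hker (j h)).1 ⟨h, rfl⟩
    have h1 : AG.src (ρ (j h)) = AH.src h := by rw [hρ.map_src, hj.map_src]
    rw [hm, AG.src_e] at h1
    rw [hm, h1]
  have dee : ∀ m, AG.Dm (AG.e m) (AG.e m) := fun m => by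
    have := AG.dm_e_src (AG.e m); rwa [AG.src_e] at this
  have ree : ∀ m, AG.mul (AG.e m) (AG.e m) = AG.e m := fun m => by
    have := AG.e_src_mul (AG.e m); rwa [AG.src_e] at this
  have key : ∀ g h, AG.tgt g = AH.src h →
      AE.Dm (s g) (j h) ∧ AE.Dm (AE.mul (s g) (j h)) (AE.inv (s g)) ∧
      ∃ h', j h' = AE.mul (AE.mul (s g) (j h)) (AE.inv (s g)) := by
    intro g h ht
    have hρjh : ρ (j h) = AG.e (AG.tgt g) := by rw [ρj, ht]
    have d1 : AE.Dm (s g) (j h) := dmE (by rw [hsec, hρjh]; exact AG.dm_e_tgt g)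
    have r1 : ρ (AE.mul (s g) (j h)) = g := by rw [ρmul d1, hsec, hρjh, AG.mul_e_tgt]
    have d2 : AE.Dm (AE.mul (s g) (j h)) (AE.inv (s g)) :=
      dmE (by rw [r1, ρinv, hsec]; exact AG.dm_inv_right g)
    have r2 : ρ (AE.mul (AE.mul (s g) (j h)) (AE.inv (s g))) = AG.e (AG.src g) := by
      rw [ρmul d2, r1, ρinv, hsec, AG.mul_inv_self]
    exact ⟨d1, d2, (hker _).2 ⟨_, r2⟩⟩
  have keyb : ∀ x, AE.Dm x (s (AG.inv (ρ x))) ∧ ∃ h, j h = AE.mul x (s (AG.inv (ρ x))) := by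
    intro x
    have d : AE.Dm x (s (AG.inv (ρ x))) := dmE (by rw [hsec]; exact AG.dm_inv_right (ρ x))
    have r : ρ (AE.mul x (s (AG.inv (ρ x)))) = AG.e (AG.src (ρ x)) := by
      rw [ρmul d, hsec, AG.mul_inv_self]
    exact ⟨d, (hker _).2 ⟨_, r⟩⟩
  refine ⟨key, keyb, ?_⟩
  set act : GC → HC → HC := fun g h =>
    if ht : AG.tgt g = AH.src h then ((key g h ht).2.2).choose else h with hactdef
  have jact : ∀ g h, AG.tgt g = AH.src h →
      j (act g h) = AE.mul (AE.mul (s g) (j h)) (AE.inv (s g)) := by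
    intro g h ht
    have hae : act g h = ((key g h ht).2.2).choose := by rw [hactdef]; simp [ht]
    rw [hae]
    exact ((key g h ht).2.2).choose_spec
  have src_act : ∀ g h, AG.tgt g = AH.src h → AH.src (act g h) = AG.src g := by
    intro g h ht
    have d1 := (key g h ht).1
    have d2 := (key g h ht).2.1
    have h1 : AE.src (j (act g h)) = AH.src (act g h) := hj.map_src _
    rw [jact g h ht, AE.src_mul d2, AE.src_mul d1, hs.map_src] at h1
    exact h1.symm
  have cond4 : ∀ h, act (AG.e (AH.src h)) h = h := by
    intro h
    have ht : AG.tgt (AG.e (AH.src h)) = AH.src h := AG.tgt_e _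
    apply hjinj
    rw [jact _ h ht, hs.map_e, AE.inv_e]
    have e1 : AE.mul (AE.e (AH.src h)) (j h) = j h := by
      have := AE.e_src_mul (j h); rwa [hj.map_src] at this
    rw [e1]
    have := AE.mul_e_tgt (j h)
    rwa [hj.map_tgt, ← hTI h] at this
  have cond2 : ∀ g₁ g₂ h, AG.Dm g₁ g₂ → AG.tgt g₂ = AH.src h →
      act (AG.mul g₁ g₂) h = act g₁ (act g₂ h) := by
    intro g₁ g₂ h hd ht
    have ht1 : AG.tgt (AG.mul g₁ g₂) = AH.src h := by rw [AG.tgt_mul hd, ht]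
    have ht2 : AG.tgt g₁ = AH.src (act g₂ h) := by
      rw [src_act g₂ h ht]; exact AG.comp_of_dm hd
    apply hjinj
    rw [jact _ _ ht1, jact _ _ ht2, jact _ _ ht]
    have hsmul : s (AG.mul g₁ g₂) = AE.mul (s g₁) (s g₂) := hs.1.map_mul hd
    set a := s g₁
    set b := s g₂
    set k := j h
    have ra : ρ a = g₁ := hsec g₁
    have rb : ρ b = g₂ := hsec g₂
    have rk : ρ k = AG.e (AG.tgt g₂) := by rw [ρj, ht]
    have dab : AE.Dm a b := dmE (by rw [ra, rb]; exact hd)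
    have dbk : AE.Dm b k := dmE (by rw [rb, rk]; exact AG.dm_e_tgt g₂)
    have rbk : ρ (AE.mul b k) = g₂ := by rw [ρmul dbk, rb, rk, AG.mul_e_tgt]
    have dabk : AE.Dm a (AE.mul b k) := dmE (by rw [ra, rbk]; exact hd)
    have h1 : AE.mul (AE.mul a b) k = AE.mul a (AE.mul b k) := AE.mul_assoc dab dbk dabk
    have rabk : ρ (AE.mul a (AE.mul b k)) = AG.mul g₁ g₂ := by rw [ρmul dabk, ra, rbk]
    have d21 : AE.Dm (AE.mul a (AE.mul b k)) (AE.inv b) :=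
      dmE (by rw [rabk, ρinv, rb]; exact AG.dm_mul_inv hd)
    have dbiai : AE.Dm (AE.inv b) (AE.inv a) :=
      dmE (by rw [ρinv, ρinv, ra, rb]; exact AG.dm_inv_inv hd)
    have d23 : AE.Dm (AE.mul a (AE.mul b k)) (AE.mul (AE.inv b) (AE.inv a)) :=
      dmE (by
        rw [rabk, ρmul dbiai, ρinv, ρinv, ra, rb, AG.mul_inv_inv hd]
        exact AG.dm_inv_right _)
    have h2 : AE.mul (AE.mul (AE.mul a (AE.mul b k)) (AE.inv b)) (AE.inv a) =
        AE.mul (AE.mul a (AE.mul b k)) (AE.mul (AE.inv b) (AE.inv a)) :=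
      AE.mul_assoc d21 dbiai d23
    have dbki : AE.Dm (AE.mul b k) (AE.inv b) :=
      dmE (by rw [rbk, ρinv, rb]; exact AG.dm_inv_right g₂)
    have d33 : AE.Dm a (AE.mul (AE.mul b k) (AE.inv b)) :=
      dmE (by
        rw [ra, ρmul dbki, rbk, ρinv, rb, AG.mul_inv_self, ← AG.comp_of_dm hd]
        exact AG.dm_e_tgt g₁)
    have h3 : AE.mul (AE.mul a (AE.mul b k)) (AE.inv b) =
        AE.mul a (AE.mul (AE.mul b k) (AE.inv b)) := AE.mul_assoc dabk dbki d33
    rw [hsmul, h1, ← AE.mul_inv_inv dab, ← h2, h3]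
  have cond3 : ∀ g h₁ h₂, AG.tgt g = AH.src h₁ → AH.tgt h₁ = AH.src h₂ →
      act g (AH.mul h₁ h₂) = AH.mul (act g h₁) (act g h₂) := by
    intro g h₁ h₂ ht hcomp
    have hdH : AH.Dm h₁ h₂ := hHGpd _ _ hcomp
    have hs2 : AH.src h₂ = AH.src h₁ := by rw [← hcomp]; exact (hTI h₁).symm
    have ht2 : AG.tgt g = AH.src h₂ := ht.trans hs2.symm
    have htm : AG.tgt g = AH.src (AH.mul h₁ h₂) := by rw [AH.src_mul hdH]; exact ht
    have hdact : AH.Dm (act g h₁) (act g h₂) := by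
      apply hHGpd
      rw [← hTI (act g h₁), src_act g h₁ ht, src_act g h₂ ht2]
    apply hjinj
    rw [jact _ _ htm, hj.1.map_mul hdact, jact _ _ ht, jact _ _ ht2, hj.1.map_mul hdH]
    set a := s g
    set k₁ := j h₁
    set k₂ := j h₂
    have ra : ρ a = g := hsec g
    have rk₁ : ρ k₁ = AG.e (AG.tgt g) := by rw [ρj, ht]
    have rk₂ : ρ k₂ = AG.e (AG.tgt g) := by rw [ρj, ← ht2]
    have dak₁ : AE.Dm a k₁ := dmE (by rw [ra, rk₁]; exact AG.dm_e_tgt g)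
    have dak₂ : AE.Dm a k₂ := dmE (by rw [ra, rk₂]; exact AG.dm_e_tgt g)
    have dk₁k₂ : AE.Dm k₁ k₂ := dmE (by rw [rk₁, rk₂]; exact dee _)
    have rak₁ : ρ (AE.mul a k₁) = g := by rw [ρmul dak₁, ra, rk₁, AG.mul_e_tgt]
    have rak₂ : ρ (AE.mul a k₂) = g := by rw [ρmul dak₂, ra, rk₂, AG.mul_e_tgt]
    have rkk : ρ (AE.mul k₁ k₂) = AG.e (AG.tgt g) := by rw [ρmul dk₁k₂, rk₁, rk₂, ree]
    have dakk : AE.Dm a (AE.mul k₁ k₂) := dmE (by rw [ra, rkk]; exact AG.dm_e_tgt g)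
    have dak₁i : AE.Dm (AE.mul a k₁) (AE.inv a) :=
      dmE (by rw [rak₁, ρinv, ra]; exact AG.dm_inv_right g)
    have dak₂i : AE.Dm (AE.mul a k₂) (AE.inv a) :=
      dmE (by rw [rak₂, ρinv, ra]; exact AG.dm_inv_right g)
    have ru : ρ (AE.mul (AE.mul a k₁) (AE.inv a)) = AG.e (AG.src g) := by
      rw [ρmul dak₁i, rak₁, ρinv, ra, AG.mul_inv_self]
    have rv : ρ (AE.mul (AE.mul a k₂) (AE.inv a)) = AG.e (AG.src g) := by
      rw [ρmul dak₂i, rak₂, ρinv, ra, AG.mul_inv_self]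
    have duak₂ : AE.Dm (AE.mul (AE.mul a k₁) (AE.inv a)) (AE.mul a k₂) :=
      dmE (by rw [ru, rak₂]; exact AG.dm_e_src g)
    have duv : AE.Dm (AE.mul (AE.mul a k₁) (AE.inv a))
        (AE.mul (AE.mul a k₂) (AE.inv a)) := dmE (by rw [ru, rv]; exact dee _)
    have stepA : AE.mul (AE.mul (AE.mul a k₁) (AE.inv a)) (AE.mul (AE.mul a k₂) (AE.inv a)) =
        AE.mul (AE.mul (AE.mul (AE.mul a k₁) (AE.inv a)) (AE.mul a k₂)) (AE.inv a) :=
      (AE.mul_assoc duak₂ dak₂i duv).symm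
    have daiak₂ : AE.Dm (AE.inv a) (AE.mul a k₂) :=
      dmE (by rw [ρinv, ra, rak₂]; exact AG.dm_inv_left g)
    have dak₁x : AE.Dm (AE.mul a k₁) (AE.mul (AE.inv a) (AE.mul a k₂)) :=
      dmE (by
        rw [rak₁, ρmul daiak₂, ρinv, ra, rak₂, AG.inv_mul_self]
        exact AG.dm_e_tgt g)
    have stepB : AE.mul (AE.mul (AE.mul a k₁) (AE.inv a)) (AE.mul a k₂) =
        AE.mul (AE.mul a k₁) (AE.mul (AE.inv a) (AE.mul a k₂)) :=
      AE.mul_assoc dak₁i daiak₂ dak₁x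
    have stepC : AE.mul (AE.inv a) (AE.mul a k₂) = k₂ := AE.inv_mul_cancel dak₂
    have stepD : AE.mul (AE.mul a k₁) k₂ = AE.mul a (AE.mul k₁ k₂) :=
      AE.mul_assoc dak₁ dk₁k₂ dakk
    rw [stepA, stepB, stepC, stepD]
  have extact : LocalGroupoid.IsExternalAction AG AH act := ⟨src_act, cond2, cond3, cond4⟩
  refine ⟨act, jact, extact, ?_⟩
  intro P hP
  obtain ⟨hPsrc, hPtgt, hPe, hPinv, hPdm, hPmul⟩ := hP
  have Φwd : ∀ x, AH.tgt ((keyb x).2.choose) = AG.src (ρ x) := by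
    intro x
    have h1 : AE.src (j ((keyb x).2.choose)) = AE.src x := by
      rw [(keyb x).2.choose_spec, AE.src_mul (keyb x).1]
    calc AH.tgt ((keyb x).2.choose) = AH.src ((keyb x).2.choose) :=
          (hTI ((keyb x).2.choose)).symm
      _ = AE.src (j ((keyb x).2.choose)) := (hj.map_src _).symm
      _ = AE.src x := h1
      _ = AG.src (ρ x) := (hρ.map_src x).symm
  set Φ : EC → SDCarrier AH AG := fun x => ⟨((keyb x).2.choose, ρ x), Φwd x⟩ with hΦdef
  have Φ1 : ∀ x, j ((Φ x).val.1) = AE.mul x (s (AG.inv (ρ x))) := fun x =>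
    (keyb x).2.choose_spec
  have Φ2 : ∀ x, (Φ x).val.2 = ρ x := fun x => rfl
  set Ψ : SDCarrier AH AG → EC := fun p => AE.mul (j p.val.1) (s p.val.2) with hΨdef
  have hΨΦ : ∀ x, Ψ (Φ x) = x := by
    intro x
    show AE.mul (j ((Φ x).val.1)) (s ((Φ x).val.2)) = x
    rw [Φ1, Φ2]
    have h1 : s (ρ x) = AE.inv (s (AG.inv (ρ x))) := by rw [← sinv, AG.inv_inv]
    rw [h1]
    exact AE.mul_inv_cancel (keyb x).1
  have srcΦ1 : ∀ x, AH.src ((Φ x).val.1) = AG.src (ρ x) := by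
    intro x
    rw [← hj.map_src, Φ1, AE.src_mul (keyb x).1, hρ.map_src]
  have dmjs : ∀ p : SDCarrier AH AG, AE.Dm (j p.val.1) (s p.val.2) := by
    intro p
    refine dmE ?_
    rw [ρj, hsec, hTI p.val.1, p.prop]
    exact AG.dm_e_src _
  have ρΨ : ∀ p, ρ (Ψ p) = p.val.2 := by
    intro p
    show ρ (AE.mul (j p.val.1) (s p.val.2)) = p.val.2
    rw [ρmul (dmjs p), ρj, hsec, hTI p.val.1, p.prop, AG.e_src_mul]
  have hΦΨ : ∀ p, Φ (Ψ p) = p := by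
    intro p
    have h2 : (Φ (Ψ p)).val.2 = p.val.2 := by rw [Φ2, ρΨ]
    have h1 : (Φ (Ψ p)).val.1 = p.val.1 := by
      apply hjinj
      rw [Φ1, ρΨ, sinv]
      show AE.mul (AE.mul (j p.val.1) (s p.val.2)) (AE.inv (s p.val.2)) = j p.val.1
      exact AE.mul_inv_cancel (dmjs p)
    exact Subtype.ext (Prod.ext h1 h2)
  have Φe : ∀ m, Φ (AE.e m) = P.e m := by
    intro m
    have he1 : (P.e m).val.1 = AH.e m := by rw [hPe]
    have he2 : (P.e m).val.2 = AG.e m := by rw [hPe]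
    refine Subtype.ext (Prod.ext ?_ ?_)
    · apply hjinj
      rw [Φ1, hρ.map_e, AG.inv_e, hs.map_e, he1, hj.map_e]
      have := AE.e_src_mul (AE.e m); rwa [AE.src_e] at this
    · rw [Φ2, hρ.map_e, he2]
  have Φdm : ∀ {x y : EC}, AE.Dm x y → P.Dm (Φ x) (Φ y) := by
    intro x y hxy
    rw [hPdm]
    exact (hEm _ _).1 hxy
  have Φmul : ∀ {x y : EC}, AE.Dm x y → Φ (AE.mul x y) = P.mul (Φ x) (Φ y) := by
    intro x y hxy
    have hd : AG.Dm (ρ x) (ρ y) := (hEm _ _).1 hxy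
    have hPm := hPmul _ _ (Φdm hxy)
    have hm1 : (P.mul (Φ x) (Φ y)).val.1 = AH.mul ((Φ x).val.1) (act (ρ x) ((Φ y).val.1)) := by
      rw [hPm]
    have hm2 : (P.mul (Φ x) (Φ y)).val.2 = AG.mul (ρ x) (ρ y) := by rw [hPm]
    refine Subtype.ext (Prod.ext ?_ ?_)
    · rw [hm1]
      apply hjinj
      have htc : AG.tgt (ρ x) = AH.src ((Φ y).val.1) := by
        rw [srcΦ1]; exact AG.comp_of_dm hd
      have hdH2 : AH.Dm ((Φ x).val.1) (act (ρ x) ((Φ y).val.1)) := by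
        apply hHGpd
        rw [← hTI ((Φ x).val.1), srcΦ1, src_act _ _ htc]
      rw [hj.1.map_mul hdH2, jact _ _ htc]
      simp only [Φ1]
      rw [ρmul hxy, sinv, sinv, sinv, hs.1.map_mul hd]
      set A := s (ρ x)
      set B := s (ρ y)
      set g₁ := ρ x
      set g₂ := ρ y
      have rA : ρ A = g₁ := hsec g₁
      have rB : ρ B = g₂ := hsec g₂
      have riA : ρ (AE.inv A) = AG.inv g₁ := by rw [ρinv, rA]
      have riB : ρ (AE.inv B) = AG.inv g₂ := by rw [ρinv, rB]
      have dAB : AE.Dm A B := dmE (by rw [rA, rB]; exact hd)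
      have dyBi : AE.Dm y (AE.inv B) := dmE (by rw [riB]; exact AG.dm_inv_right g₂)
      have rw1 : ρ (AE.mul y (AE.inv B)) = AG.e (AG.src g₂) := by
        rw [ρmul dyBi, riB, AG.mul_inv_self]
      have dAw : AE.Dm A (AE.mul y (AE.inv B)) :=
        dmE (by rw [rA, rw1, ← AG.comp_of_dm hd]; exact AG.dm_e_tgt g₁)
      have rAw : ρ (AE.mul A (AE.mul y (AE.inv B))) = g₁ := by
        rw [ρmul dAw, rA, rw1, ← AG.comp_of_dm hd, AG.mul_e_tgt]
      have dAwAi : AE.Dm (AE.mul A (AE.mul y (AE.inv B))) (AE.inv A) :=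
        dmE (by rw [rAw, riA]; exact AG.dm_inv_right g₁)
      have dxAi : AE.Dm x (AE.inv A) := dmE (by rw [riA]; exact AG.dm_inv_right g₁)
      have rAwAi : ρ (AE.mul (AE.mul A (AE.mul y (AE.inv B))) (AE.inv A)) =
          AG.e (AG.src g₁) := by rw [ρmul dAwAi, rAw, riA, AG.mul_inv_self]
      have dAiz : AE.Dm (AE.inv A) (AE.mul (AE.mul A (AE.mul y (AE.inv B))) (AE.inv A)) :=
        dmE (by rw [riA, rAwAi, ← AG.tgt_inv g₁]; exact AG.dm_e_tgt (AG.inv g₁))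
      have dxr : AE.Dm x
          (AE.mul (AE.inv A) (AE.mul (AE.mul A (AE.mul y (AE.inv B))) (AE.inv A))) :=
        dmE (by
          rw [ρmul dAiz, riA, rAwAi, ← AG.tgt_inv g₁, AG.mul_e_tgt]
          exact AG.dm_inv_right g₁)
      have step1 : AE.mul (AE.mul x (AE.inv A))
            (AE.mul (AE.mul A (AE.mul y (AE.inv B))) (AE.inv A)) =
          AE.mul x (AE.mul (AE.inv A)
            (AE.mul (AE.mul A (AE.mul y (AE.inv B))) (AE.inv A))) :=
        AE.mul_assoc dxAi dAiz dxr
      have dAiAw : AE.Dm (AE.inv A) (AE.mul A (AE.mul y (AE.inv B))) :=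
        dmE (by rw [riA, rAw]; exact AG.dm_inv_left g₁)
      have step2 : AE.mul (AE.mul (AE.inv A) (AE.mul A (AE.mul y (AE.inv B)))) (AE.inv A) =
          AE.mul (AE.inv A) (AE.mul (AE.mul A (AE.mul y (AE.inv B))) (AE.inv A)) :=
        AE.mul_assoc dAiAw dAwAi dAiz
      have step3 : AE.mul (AE.inv A) (AE.mul A (AE.mul y (AE.inv B))) =
          AE.mul y (AE.inv B) := AE.inv_mul_cancel dAw
      have dBiAi : AE.Dm (AE.inv B) (AE.inv A) :=
        dmE (by rw [riA, riB]; exact AG.dm_inv_inv hd)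
      have dyBiAi : AE.Dm y (AE.mul (AE.inv B) (AE.inv A)) :=
        dmE (by
          rw [ρmul dBiAi, riA, riB, AG.mul_inv_inv hd]
          have := AG.dm_inv_inv (AG.dm_mul_inv hd)
          rwa [AG.inv_inv] at this)
      have step4 : AE.mul (AE.mul y (AE.inv B)) (AE.inv A) =
          AE.mul y (AE.mul (AE.inv B) (AE.inv A)) := AE.mul_assoc dyBi dBiAi dyBiAi
      have hgg : AG.mul g₂ (AG.inv (AG.mul g₁ g₂)) = AG.inv g₁ := by
        have h5 := AG.inv_mul_cancel (AG.dm_inv_inv hd)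
        rwa [AG.inv_inv, AG.mul_inv_inv hd] at h5
      have dxy2 : AE.Dm x (AE.mul y (AE.mul (AE.inv B) (AE.inv A))) :=
        dmE (by
          rw [ρmul dyBiAi, ρmul dBiAi, riA, riB, AG.mul_inv_inv hd, hgg]
          exact AG.dm_inv_right g₁)
      have step5 : AE.mul (AE.mul x y) (AE.mul (AE.inv B) (AE.inv A)) =
          AE.mul x (AE.mul y (AE.mul (AE.inv B) (AE.inv A))) :=
        AE.mul_assoc hxy dyBiAi dxy2
      rw [← AE.mul_inv_inv dAB, step5, step1, ← step2, step3, step4]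
    · rw [hm2]
      show ρ (AE.mul x y) = AG.mul (ρ x) (ρ y)
      exact ρmul hxy
  have Φoverid : ∀ m, P.src (Φ (AE.e m)) = m := by
    intro m
    rw [hPsrc]
    show AG.src (ρ (AE.e m)) = m
    rw [hρ.map_e, AG.src_e]
  have ΦMor : LocalGroupoid.IsMorphismOverId AE P Φ :=
    ⟨⟨fun m => ⟨m, Φe m⟩, Φdm, Φmul⟩, Φoverid⟩
  have Φj : ∀ h, Φ (j h) = sdJ AH AG h := by
    intro h
    refine Subtype.ext (Prod.ext ?_ ?_)
    · apply hjinj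
      rw [Φ1, ρj, AG.inv_e, hs.map_e]
      show AE.mul (j h) (AE.e (AH.src h)) = j (sdJ AH AG h).val.1
      have := AE.mul_e_tgt (j h)
      rw [hj.map_tgt, ← hTI h] at this
      rw [this]
      rfl
    · show ρ (j h) = (sdJ AH AG h).val.2
      rw [ρj, hTI h]
      rfl
  refine ⟨Φ, fun x => ⟨Φ1 x, rfl⟩, ⟨Function.LeftInverse.injective hΨΦ,
    fun p => ⟨Ψ p, hΦΨ p⟩⟩, ΦMor, ?_, Φj, fun x => rfl⟩
  intro ψ hL hR
  have hψeq : ∀ p, ψ p = Ψ p := by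
    intro p
    have := hL (Ψ p)
    rwa [hΦΨ p] at this
  have ψe : ∀ m, ψ (P.e m) = AE.e m := by
    intro m
    rw [← Φe m]
    exact hL _
  have ρψ : ∀ p, ρ (ψ p) = p.val.2 := by intro p; rw [hψeq, ρΨ]
  have ψdm : ∀ {p q : SDCarrier AH AG}, P.Dm p q → AE.Dm (ψ p) (ψ q) := by
    intro p q hpq
    refine dmE ?_
    rw [ρψ, ρψ]
    exact (hPdm _ _).1 hpq
  refine ⟨⟨fun m => ⟨m, ψe m⟩, ψdm, ?_⟩, fun m => by rw [ψe, AE.src_e]⟩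
  intro p q hpq
  apply hL.injective
  rw [hR, Φmul (ψdm hpq), hR p, hR q]
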